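/- If (Δ_{P_A,γ_A} ⊗ I_B)(ρ_{AB}) = ρ_{AB} for a bipartite state ρ_{AB}, then ρ_{AB} is separable and can be written as ρ_{AB} = Σ_i λ_i (Σ_y c_y^i Π_y γ_A) ⊗ σ_B^i with λ_i ≥ 0, Σ_i λ_i = 1, c_y^i ≥ 0, and states σ_B^i; conversely, any state of that form is a fixed point of Δ_{P_A,γ_A} ⊗ I_B. -/

import Mathlib

open Matrix BigOperators Filter
open scoped ComplexOrder Kronecker Classical

abbrev Mat (d : ℕ) := Matrix (Fin d) (Fin d) ℂ

def IsPOVM {X : Type*} [Fintype X] {d : ℕ} (P : X → Mat d) : Prop :=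
  (∀ x, (P x).PosSemidef) ∧ ∑ x, P x = 1

def IsPVM {X : Type*} [Fintype X] {d : ℕ} (P : X → Mat d) : Prop :=
  IsPOVM P ∧ (∀ x, P x * P x = P x) ∧ ∀ x y, x ≠ y → P x * P y = 0

def IsDensity {d : ℕ} (ρ : Mat d) : Prop := ρ.PosSemidef ∧ ρ.trace = 1

/-- `Q ⪯ P`: `Q` is a classical post-processing of `P`. -/
def IsPostProcessingOf {Y X : Type*} [Fintype Y] [Fintype X] {d : ℕ}
    (Q : Y → Mat d) (P : X → Mat d) : Prop :=
  ∃ p : X → Y → ℝ, (∀ x y, 0 ≤ p x y) ∧ (∀ x, ∑ y, p x y = 1) ∧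
    ∀ y, Q y = ∑ x, (p x y : ℂ) • P x

/-- The coarse-graining map `C_{P,γ}(ρ) = ∑_x Tr[P_x ρ] γ^{1/2} P_x γ^{1/2} / Tr[P_x γ]`. -/
noncomputable def coarseMap {X : Type*} [Fintype X] {d : ℕ}
    (P : X → Mat d) {γ : Mat d} (hγ : γ.PosSemidef) : Mat d → Mat d :=
  fun ρ => ∑ x, ((P x * ρ).trace / (P x * γ).trace) • ((hγ.1.eigenvectorUnitary.1 * diagonal ((RCLike.ofReal : ℝ → ℂ) ∘ (√·) ∘ hγ.1.eigenvalues) *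
        (star hγ.1.eigenvectorUnitary : Mat d)) * P x *
      (hγ.1.eigenvectorUnitary.1 * diagonal ((RCLike.ofReal : ℝ → ℂ) ∘ (√·) ∘ hγ.1.eigenvalues) *
        (star hγ.1.eigenvectorUnitary : Mat d)))

/-- The resource-destroying map `Δ(ρ) = ∑_y Tr[Π_y ρ] Π_y γ / Tr[Π_y γ]`. -/
noncomputable def deltaMap {Y : Type*} [Fintype Y] {d : ℕ}
    (Pv : Y → Mat d) (γ : Mat d) : Mat d → Mat d :=
  fun ρ => ∑ y, ((Pv y * ρ).trace / (Pv y * γ).trace) • (Pv y * γ)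

/-- Apply `Φ` blockwise to a `k × k` block matrix, i.e. `(id_k ⊗ Φ)`. -/
def blockApply {d : ℕ} (Φ : Mat d → Mat d) (k : ℕ)
    (M : Matrix (Fin k × Fin d) (Fin k × Fin d) ℂ) :
    Matrix (Fin k × Fin d) (Fin k × Fin d) ℂ :=
  Matrix.of fun p q => Φ (Matrix.of fun a b => M (p.1, a) (q.1, b)) p.2 q.2

/-- Complete positivity: `id_k ⊗ Φ` preserves positive semidefiniteness for all `k`. -/
def IsCompletelyPositive {d : ℕ} (Φ : Mat d → Mat d) : Prop :=
  ∀ (k : ℕ) (M : Matrix (Fin k × Fin d) (Fin k × Fin d) ℂ),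
    M.PosSemidef → (blockApply Φ k M).PosSemidef

/-- `Pv` is a maximal γ-commuting projective post-processing (MPPP) of `P`:
a PVM, a classical post-processing of `P`, commuting with `γ`, and maximal
among all such PVMs with respect to classical post-processing. -/
def IsMPPP {Y X : Type*} [Fintype Y] [Fintype X] {d : ℕ}
    (Pv : Y → Mat d) (P : X → Mat d) (γ : Mat d) : Prop :=
  IsPVM Pv ∧ (∀ y, Pv y * γ = γ * Pv y) ∧ IsPostProcessingOf Pv P ∧
    ∀ (Y' : Type) [Fintype Y'] (Pv' : Y' → Mat d),
      IsPVM Pv' → (∀ y, Pv' y * γ = γ * Pv' y) → IsPostProcessingOf Pv' P →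
        IsPostProcessingOf Pv' Pv

/-- The local map `Δ ⊗ id_B` acting on a bipartite matrix. -/
noncomputable def deltaTensorId {Y : Type*} [Fintype Y] {dA dB : ℕ}
    (Pv : Y → Mat dA) (γA : Mat dA)
    (ρAB : Matrix (Fin dA × Fin dB) (Fin dA × Fin dB) ℂ) :
    Matrix (Fin dA × Fin dB) (Fin dA × Fin dB) ℂ :=
  Matrix.of fun p q =>
    deltaMap Pv γA (Matrix.of fun a a' => ρAB (a, p.2) (a', q.2)) p.1 q.1

/-!
Put `τ_y = Tr_A[(Π_y ⊗ 1) ρ]`. Entrywise, `(Δ ⊗ id)(ρ) = ∑_y (Tr[Π_y γ])⁻¹ (Π_y γ) ⊗ τ_y`.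
Here `τ_y` is positive because compressing `ρ` by the projection `Π_y ⊗ 1` does not change it, and
`Π_y γ = Π_y γ Π_y` is positive because `Π_y` commutes with `γ`. So a fixed point `ρ` is the
convex combination, with weights `Tr τ_y`, of the product states
`(Π_y γ / Tr[Π_y γ]) ⊗ (τ_y / Tr τ_y)`, where terms with a vanishing trace are dropped. Conversely,
the `Π_y` are mutually orthogonal projections, so `Δ` fixes every `Π_y γ`. Hence `Δ ⊗ id` fixes
every sum of terms `(∑_y c_y Π_y γ) ⊗ σ`.
-/

namespace Matrix

variable {m n R : Type*} [Fintype m]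

/-- The partial trace `Tr_A` over the first tensor factor. -/
def partialTrace [AddCommMonoid R] (M : Matrix (m × n) (m × n) R) : Matrix n n R :=
  ∑ a, M.submatrix (Prod.mk a) (Prod.mk a)

lemma partialTrace_kronecker_one_mul_apply [Fintype n] [CommSemiring R] [DecidableEq n]
    (A : Matrix m m R) (M : Matrix (m × n) (m × n) R) (b b' : n) :
    partialTrace ((A ⊗ₖ 1) * M) b b' = (A * M.submatrix (·, b) (·, b')).trace := by
  simp [partialTrace, trace, mul_apply, sum_apply, one_apply, Fintype.sum_prod_type]

lemma partialTrace_kronecker_one_mul_comm [Fintype n] [CommSemiring R] [DecidableEq n]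
    (A : Matrix m m R) (M : Matrix (m × n) (m × n) R) :
    partialTrace ((A ⊗ₖ 1) * M) = partialTrace (M * (A ⊗ₖ 1)) := by
  ext b b'
  simp only [partialTrace, sum_apply, submatrix_apply, mul_apply, kroneckerMap_apply, one_apply,
    mul_ite, mul_one, mul_zero, ite_mul, zero_mul, Fintype.sum_prod_type, Finset.sum_ite_eq,
    Finset.mem_univ, ↓reduceIte, Finset.sum_ite_eq']
  rw [Finset.sum_comm]
  simp only [mul_comm]

protected lemma PosSemidef.partialTrace [CommRing R] [PartialOrder R] [StarRing R]
    [AddLeftMono R] {M : Matrix (m × n) (m × n) R} (hM : M.PosSemidef) :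
    (partialTrace M).PosSemidef :=
  posSemidef_sum _ fun _ _ => hM.submatrix _

lemma PosSemidef.partialTrace_kronecker_one_mul [Fintype n] [DecidableEq n] [CommRing R]
    [PartialOrder R] [StarRing R] [StarOrderedRing R] {M : Matrix (m × n) (m × n) R}
    (hM : M.PosSemidef) {P : Matrix m m R} (hP : IsStarProjection P) :
    (partialTrace ((P ⊗ₖ 1) * M)).PosSemidef := by
  have hPh : (P ⊗ₖ (1 : Matrix n n R))ᴴ = P ⊗ₖ 1 := by
    rw [conjTranspose_kronecker, conjTranspose_one, ← star_eq_conjTranspose, hP.isSelfAdjoint]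
  have hPP : (P ⊗ₖ (1 : Matrix n n R)) * (P ⊗ₖ 1) = P ⊗ₖ 1 := by
    rw [← mul_kronecker_mul, hP.isIdempotentElem.eq, one_mul]
  have hcompress :
      partialTrace ((P ⊗ₖ 1) * M) = partialTrace ((P ⊗ₖ 1) * M * (P ⊗ₖ 1)ᴴ) := by
    rw [hPh, ← partialTrace_kronecker_one_mul_comm, ← mul_assoc, hPP]
  rw [hcompress]
  exact (hM.mul_mul_conjTranspose_same _).partialTrace

lemma PosSemidef.mul_of_commute_of_isStarProjection [CommRing R] [PartialOrder R] [StarRing R]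
    {A P : Matrix m m R} (hA : A.PosSemidef) (hP : IsStarProjection P) (hPA : P * A = A * P) :
    (P * A).PosSemidef := by
  have hcompress : P * A = P * A * Pᴴ := by
    rw [← star_eq_conjTranspose, hP.isSelfAdjoint, mul_assoc, ← hPA, ← mul_assoc,
      hP.isIdempotentElem.eq]
  rw [hcompress]
  exact hA.mul_mul_conjTranspose_same P

lemma PosSemidef.ofReal_re_trace {M : Matrix m m ℂ} (hM : M.PosSemidef) :
    ((M.trace.re : ℝ) : ℂ) = M.trace :=
  (Complex.eq_re_of_ofReal_le (r := 0) (by rw [Complex.ofReal_zero]; exact hM.trace_nonneg)).symm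

/-- Also true when a trace vanishes: `0⁻¹ = 0` on the left, and `τ = 0` once `Tr τ = 0`. -/
lemma inv_trace_smul_kronecker_eq [Fintype n] (A : Matrix m m ℂ) {τ : Matrix n n ℂ}
    (hτ : τ.PosSemidef) :
    (A.trace)⁻¹ • (A ⊗ₖ τ) = τ.trace • (((A.trace)⁻¹ • A) ⊗ₖ ((τ.trace)⁻¹ • τ)) := by
  by_cases h0 : τ.trace = 0
  · simp [hτ.trace_eq_zero_iff.mp h0]
  · rw [smul_kronecker, kronecker_smul, smul_smul, smul_smul, mul_right_comm,
      mul_inv_cancel₀ h0, one_mul]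

lemma sum_inv_trace_smul_kronecker_eq_sum_filter [Fintype n] {ι : Type*} [Fintype ι]
    (A : ι → Matrix m m ℂ) {τ : ι → Matrix n n ℂ} (hτ : ∀ i, (τ i).PosSemidef) :
    ∑ i, ((A i).trace)⁻¹ • (A i ⊗ₖ τ i) =
      ∑ i ∈ Finset.univ.filter fun i => (A i).trace ≠ 0 ∧ (τ i).trace ≠ 0,
        (τ i).trace • ((((A i).trace)⁻¹ • A i) ⊗ₖ (((τ i).trace)⁻¹ • τ i)) := by
  rw [Finset.sum_filter_of_ne]
  · exact Finset.sum_congr rfl fun i _ => inv_trace_smul_kronecker_eq _ (hτ i)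
  · intro i _ hi
    contrapose! hi
    by_cases hAi : (A i).trace = 0 <;> simp_all

end Matrix

lemma IsPVM.isStarProjection {X : Type*} [Fintype X] {d : ℕ} {P : X → Mat d} (hP : IsPVM P)
    (x : X) : IsStarProjection (P x) :=
  ⟨hP.2.1 x, (hP.1.1 x).isHermitian.isSelfAdjoint⟩

lemma isDensity_inv_trace_smul {d : ℕ} {M : Mat d} (hM : M.PosSemidef) (h : M.trace ≠ 0) :
    IsDensity ((M.trace)⁻¹ • M) :=
  ⟨hM.smul (inv_nonneg.mpr hM.trace_nonneg), by rw [trace_smul, smul_eq_mul, inv_mul_cancel₀ h]⟩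

theorem exists_convex_decomposition_of_sum_kronecker {ι : Type*} [Fintype ι] {dA dB : ℕ}
    {A : ι → Mat dA} {τ : ι → Mat dB} (hA : ∀ i, (A i).PosSemidef) (hτ : ∀ i, (τ i).PosSemidef)
    (h1 : (∑ i, ((A i).trace)⁻¹ • (A i ⊗ₖ τ i)).trace = 1) :
    ∃ (m : ℕ) (lam : Fin m → ℝ) (c : Fin m → ι → ℝ) (σ : Fin m → Mat dB),
      (∀ k, 0 ≤ lam k) ∧ (∑ k, lam k = 1) ∧ (∀ k i, 0 ≤ c k i) ∧
      (∀ k, IsDensity (∑ i, (c k i : ℂ) • A i)) ∧ (∀ k, IsDensity (σ k)) ∧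
      ∑ i, ((A i).trace)⁻¹ • (A i ⊗ₖ τ i) =
        ∑ k, (lam k : ℂ) • ((∑ i, (c k i : ℂ) • A i) ⊗ₖ σ k) := by
  let S := Finset.univ.filter fun i => (A i).trace ≠ 0 ∧ (τ i).trace ≠ 0
  let j : Fin S.card → ι := fun k => S.equivFin.symm k
  have hjS : ∀ k, (A (j k)).trace ≠ 0 ∧ (τ (j k)).trace ≠ 0 := fun k =>
    (Finset.mem_filter.mp (S.equivFin.symm k).2).2
  have hreindex : ∀ {M : Type} [AddCommMonoid M] (f : ι → M), ∑ k, f (j k) = ∑ i ∈ S, f i :=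
    fun f => (Equiv.sum_comp S.equivFin.symm fun s => f s).trans (S.sum_coe_sort f)
  let c : Fin S.card → ι → ℝ := fun k i => if i = j k then ((A i).trace.re)⁻¹ else 0
  have hc : ∀ k, ∑ i, (c k i : ℂ) • A i = (A (j k)).trace⁻¹ • A (j k) := fun k => by
    simp [c, apply_ite, ite_smul, (hA _).ofReal_re_trace]
  have hsplit := sum_inv_trace_smul_kronecker_eq_sum_filter A hτ
  refine ⟨S.card, fun k => (τ (j k)).trace.re, c, fun k => ((τ (j k)).trace)⁻¹ • τ (j k),
    fun k => (Complex.nonneg_iff.mp (hτ (j k)).trace_nonneg).1, ?_, fun k i => ?_,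
    fun k => hc k ▸ isDensity_inv_trace_smul (hA _) (hjS k).1,
    fun k => isDensity_inv_trace_smul (hτ _) (hjS k).2, ?_⟩
  · have hsum : ∑ k, ((τ (j k)).trace.re : ℂ) = 1 := by
      rw [← h1, hsplit, trace_sum, hreindex fun i => ((τ i).trace.re : ℂ)]
      refine Finset.sum_congr rfl fun i hi => ?_
      obtain ⟨hAi, hτi⟩ := (Finset.mem_filter.mp hi).2
      rw [trace_smul, trace_kronecker, (isDensity_inv_trace_smul (hA i) hAi).2,
        (isDensity_inv_trace_smul (hτ i) hτi).2, (hτ i).ofReal_re_trace, mul_one, smul_eq_mul,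
        mul_one]
    exact_mod_cast hsum
  · simp only [c]
    split_ifs
    · exact inv_nonneg.mpr (Complex.nonneg_iff.mp (hA i).trace_nonneg).1
    · exact le_rfl
  · rw [hsplit, ← hreindex]
    simp only [hc, fun i => (hτ i).ofReal_re_trace]

section DeltaMap

variable {Y : Type*} [Fintype Y] {dA dB : ℕ} (Pv : Y → Mat dA) (γ : Mat dA)

lemma isLinearMap_deltaMap : IsLinearMap ℂ (deltaMap Pv γ) where
  map_add ρ σ := by
    simp [deltaMap, Matrix.mul_add, add_div, add_smul, Finset.sum_add_distrib]
  map_smul c ρ := by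
    simp [deltaMap, Finset.smul_sum, mul_div_assoc, smul_smul]

variable {Pv γ} in
lemma isFixedPt_deltaMap_mul (hPv : IsPVM Pv) (hγ : γ.PosSemidef) {y : Y}
    (hcomm : Pv y * γ = γ * Pv y) : Function.IsFixedPt (deltaMap Pv γ) (Pv y * γ) := by
  have hPγ := hγ.mul_of_commute_of_isStarProjection (hPv.isStarProjection y) hcomm
  rw [Function.IsFixedPt, deltaMap, Finset.sum_eq_single y]
  · by_cases h0 : (Pv y * γ).trace = 0
    · simp [hPγ.trace_eq_zero_iff.mp h0]
    · rw [← mul_assoc, hPv.2.1 y, div_self h0, one_smul]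
  · intro y' _ hne
    rw [← mul_assoc, hPv.2.2 y' y hne]
    simp
  · simp

variable {Pv γ} in
lemma isFixedPt_deltaMap_sum_smul_mul (hPv : IsPVM Pv) (hγ : γ.PosSemidef)
    (hcomm : ∀ y, Pv y * γ = γ * Pv y) (c : Y → ℂ) :
    Function.IsFixedPt (deltaMap Pv γ) (∑ y, c y • (Pv y * γ)) := by
  rw [Function.IsFixedPt, ← IsLinearMap.mk'_apply (isLinearMap_deltaMap Pv γ), map_sum]
  simp [(isFixedPt_deltaMap_mul hPv hγ (hcomm _)).eq]

lemma deltaTensorId_apply (ρ : Matrix (Fin dA × Fin dB) (Fin dA × Fin dB) ℂ)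
    (p q : Fin dA × Fin dB) :
    deltaTensorId Pv γ ρ p q = deltaMap Pv γ (ρ.submatrix (·, p.2) (·, q.2)) p.1 q.1 :=
  rfl

lemma isLinearMap_deltaTensorId : IsLinearMap ℂ (deltaTensorId (dB := dB) Pv γ) where
  map_add ρ σ := by
    ext p q
    simp [deltaTensorId_apply, submatrix_add, (isLinearMap_deltaMap Pv γ).map_add]
  map_smul c ρ := by
    ext p q
    simp [deltaTensorId_apply, submatrix_smul, (isLinearMap_deltaMap Pv γ).map_smul]

lemma deltaTensorId_kronecker (A : Mat dA) (B : Mat dB) :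
    deltaTensorId Pv γ (A ⊗ₖ B) = deltaMap Pv γ A ⊗ₖ B := by
  ext p q
  have hblock : (A ⊗ₖ B).submatrix (·, p.2) (·, q.2) = B p.2 q.2 • A := by
    ext a a'
    simp [mul_comm]
  simp [deltaTensorId_apply, hblock, (isLinearMap_deltaMap Pv γ).map_smul, mul_comm]

lemma deltaTensorId_eq_sum_kronecker (ρ : Matrix (Fin dA × Fin dB) (Fin dA × Fin dB) ℂ) :
    deltaTensorId Pv γ ρ =
      ∑ y, ((Pv y * γ).trace)⁻¹ • ((Pv y * γ) ⊗ₖ partialTrace ((Pv y ⊗ₖ 1) * ρ)) := by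
  ext p q
  simp only [deltaTensorId_apply, deltaMap, Matrix.sum_apply, Matrix.smul_apply, smul_eq_mul,
    kroneckerMap_apply, partialTrace_kronecker_one_mul_apply]
  exact Finset.sum_congr rfl fun _ _ => by ring

variable {Pv γ} in
lemma isFixedPt_deltaTensorId_sum_smul_kronecker {ι : Type*} [Fintype ι] {A : ι → Mat dA}
    (hA : ∀ i, Function.IsFixedPt (deltaMap Pv γ) (A i)) (lam : ι → ℂ) (σ : ι → Mat dB) :
    Function.IsFixedPt (deltaTensorId Pv γ) (∑ i, lam i • (A i ⊗ₖ σ i)) := by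
  rw [Function.IsFixedPt, ← IsLinearMap.mk'_apply (isLinearMap_deltaTensorId Pv γ), map_sum]
  simp [deltaTensorId_kronecker, fun i => (hA i).eq]

end DeltaMap

theorem locally_macroscopic_iff_separable_form_general {X Y : Type*} [Fintype X] [Fintype Y]
    {dA dB : ℕ}
    (P : X → Mat dA) (γA : Mat dA) (Pv : Y → Mat dA)
    (ρAB : Matrix (Fin dA × Fin dB) (Fin dA × Fin dB) ℂ)
    (hγ : γA.PosDef)
    (hmppp : IsMPPP Pv P γA)
    (hρ : ρAB.PosSemidef) (hρ1 : ρAB.trace = 1) :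
    deltaTensorId Pv γA ρAB = ρAB ↔
      ∃ (m : ℕ) (lam : Fin m → ℝ) (c : Fin m → Y → ℝ) (σB : Fin m → Mat dB),
        (∀ i, 0 ≤ lam i) ∧ (∑ i, lam i = 1) ∧
        (∀ i y, 0 ≤ c i y) ∧
        (∀ i, IsDensity (∑ y, (c i y : ℂ) • (Pv y * γA))) ∧
        (∀ i, IsDensity (σB i)) ∧
        ρAB = ∑ i, (lam i : ℂ) •
          ((∑ y, (c i y : ℂ) • (Pv y * γA)) ⊗ₖ σB i) := by
  obtain ⟨hPv, hcomm, -, -⟩ := hmppp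
  constructor
  · intro hfix
    have hdecomp := hfix.symm.trans (deltaTensorId_eq_sum_kronecker Pv γA ρAB)
    rw [hdecomp] at hρ1 ⊢
    exact exists_convex_decomposition_of_sum_kronecker
      (fun y => hγ.posSemidef.mul_of_commute_of_isStarProjection (hPv.isStarProjection y)
        (hcomm y))
      (fun y => hρ.partialTrace_kronecker_one_mul (hPv.isStarProjection y)) hρ1
  · rintro ⟨m, lam, c, σB, -, -, -, -, -, rfl⟩
    exact isFixedPt_deltaTensorId_sum_smul_kronecker
      (fun i => isFixedPt_deltaMap_sum_smul_mul hPv hγ.posSemidef hcomm _) _ _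

/-- a bipartite state `ρ_AB` satisfies
`(Δ_{P_A,γ_A} ⊗ I_B)(ρ_AB) = ρ_AB` iff it is a separable state of the form
`∑_i λ_i (∑_y c_y^i Π_y γ_A) ⊗ σ_B^i`. -/
theorem locally_macroscopic_iff_separable_form {X Y : Type*} [Fintype X] [Fintype Y]
    {dA dB : ℕ}
    (P : X → Mat dA) (γA : Mat dA) (Pv : Y → Mat dA)
    (ρAB : Matrix (Fin dA × Fin dB) (Fin dA × Fin dB) ℂ)
    (hP : IsPOVM P) (hγ : γA.PosDef) (hγ1 : γA.trace = 1)
    (hmppp : IsMPPP Pv P γA)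
    (hρ : ρAB.PosSemidef) (hρ1 : ρAB.trace = 1) :
    deltaTensorId Pv γA ρAB = ρAB ↔
      ∃ (m : ℕ) (lam : Fin m → ℝ) (c : Fin m → Y → ℝ) (σB : Fin m → Mat dB),
        (∀ i, 0 ≤ lam i) ∧ (∑ i, lam i = 1) ∧
        (∀ i y, 0 ≤ c i y) ∧
        (∀ i, IsDensity (∑ y, (c i y : ℂ) • (Pv y * γA))) ∧
        (∀ i, IsDensity (σB i)) ∧
        ρAB = ∑ i, (lam i : ℂ) •
          ((∑ y, (c i y : ℂ) • (Pv y * γA)) ⊗ₖ σB i) :=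
  locally_macroscopic_iff_separable_form_general P γA Pv ρAB hγ hmppp hρ hρ1
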